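/- arXiv:cond-mat/0606038 — 5 statements merged into one kernel-verified Lean document; each statement's English description precedes it below -/
import Mathlib

section
/- Let 1 ≤ q < 2, 0 < α < 2, and let X₁, …, X_m be q-independent random variables, each having a (q,α)-stable distribution, say F_q[X_j](ξ) = e_q^{−β_j |ξ|^α} with β_j > 0. Then for any nonzero real constants a₁, …, a_m the linear combination Σ_{j=1}^m a_j X_j again has a (q,α)-stable distribution; in fact F_q[Σ_j a_j X_j](ξ) = e_q^{−β|ξ|^α} with β = Σ_{j=1}^m β_j |a_j|^{α(2−q)} > 0. -/
open Complex MeasureTheory Filter Topology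

noncomputable section

/-- The complex `q`-exponential: principal branch of `(1+(1-q)z)^{1/(1-q)}`. -/
def qExp (q : ℝ) (z : ℂ) : ℂ := (1 + (1 - (q : ℂ)) * z) ^ ((1 : ℂ) / (1 - (q : ℂ)))

/-- The real `q`-exponential `e_q^x = [1+(1-q)x]₊^{1/(1-q)}`. -/
def qExpR (q x : ℝ) : ℝ := (max (1 + (1 - q) * x) 0) ^ (1 / (1 - q))

/-- The complex `q`-product (principal branches). -/
def qProdC (q : ℝ) (z w : ℂ) : ℂ :=
  (z ^ (1 - (q : ℂ)) + w ^ (1 - (q : ℂ)) - 1) ^ ((1 : ℂ) / (1 - (q : ℂ)))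

/-- The `q`-Fourier transform `F_q[f](ξ) = ∫ f(x) e_q^{i x ξ f(x)^{q-1}} dx`. -/
def qFourier (q : ℝ) (f : ℝ → ℝ) (ξ : ℝ) : ℂ :=
  ∫ x : ℝ, (f x : ℂ) * qExp q (Complex.I * (x : ℂ) * (ξ : ℂ) * ((f x ^ (q - 1) : ℝ) : ℂ))

/-- `A_n(q) = ∏_{k=0}^n (q - k(1-q))`. -/
def qA (q : ℝ) (n : ℕ) : ℝ := ∏ k ∈ Finset.range (n + 1), (q - (k : ℝ) * (1 - q))

/-- The `q`-cosine, defined for all real `x` by its power series. -/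
def qCos (q x : ℝ) : ℝ :=
  1 - x ^ 2 * ∑' n : ℕ, (-1 : ℝ) ^ n * qA q (2 * n) / (Nat.factorial (2 * n + 2) : ℝ) * x ^ (2 * n)

/-- The `q`-sine, defined for all real `x` by its power series. -/
def qSin (q x : ℝ) : ℝ :=
  x - x ^ 2 * ∑' n : ℕ, (-1 : ℝ) ^ n * qA q (2 * n + 1) / (Nat.factorial (2 * n + 3) : ℝ) * x ^ (2 * n + 1)

/-- `Ψ_q(x) = cos_q(2x) - 1`. -/
def qPsi (q x : ℝ) : ℝ := qCos q (2 * x) - 1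

/-- The complex-valued `q`-sine `sin_q(x) = (e_q^{ix} - e_q^{-ix})/(2i)`. -/
def qSinC (q : ℝ) (x : ℝ) : ℂ :=
  (qExp q (Complex.I * (x : ℂ)) - qExp q (-(Complex.I * (x : ℂ)))) / (2 * Complex.I)

/-- The constant `μ_{q,α}` (with tail constant `C`). -/
def qMu (q α C : ℝ) : ℝ :=
  (2 ^ (2 - α) * (1 + α * (q - 1)) * C / (2 - q)) *
    ∫ y in Set.Ioi (0 : ℝ), (-qPsi q y) / y ^ (α + 1)

/-- The `n`-fold `q`-product `g 0 ⊗_q g 1 ⊗_q ⋯ ⊗_q g (n-1)`. -/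
def qProdFold (q : ℝ) (g : ℕ → ℂ) : ℕ → ℂ
  | 0 => 1
  | 1 => g 0
  | (n + 2) => qProdC q (qProdFold q g (n + 1)) (g (n + 1))

/-!
For `1 ≤ q` the real `q`-exponentials of nonpositive arguments satisfy
`e_q^x ⊗_q e_q^y = e_q^{x+y}`, because `(e_q^x)^{1-q} = 1 + (1-q)x` turns the `q`-product into
a sum. Rescaling a density by `a` rescales its `q`-Fourier variable by `a |a|^{1-q}`, so
`a_j X_j` has `q`-Fourier transform `e_q^{-β_j |a_j|^{α(2-q)} |ξ|^α}`, and `q`-independence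
multiplies these out to `e_q^{-β |ξ|^α}`.
-/

-- The exponent `1 / (1 - q)` is `1 / 0 = 0` at `q = 1`, so `qExp 1` is constantly `1`.
lemma qExp_one (z : ℂ) : qExp 1 z = 1 := by
  simp [qExp]

lemma qExp_ofReal_of_nonpos {q : ℝ} (hq : 1 < q) {x : ℝ} (hx : x ≤ 0) :
    qExp q x = (((1 + (1 - q) * x) ^ (1 / (1 - q)) : ℝ) : ℂ) := by
  have hbase : 0 ≤ 1 + (1 - q) * x := by nlinarith
  rw [qExp, Complex.ofReal_cpow hbase]
  push_cast
  ring_nf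

lemma qExp_ofReal_cpow_one_sub {q : ℝ} (hq : 1 < q) {x : ℝ} (hx : x ≤ 0) :
    qExp q x ^ (1 - (q : ℂ)) = ((1 + (1 - q) * x : ℝ) : ℂ) := by
  have hbase : 0 ≤ 1 + (1 - q) * x := by nlinarith
  have hexp : ((1 - q : ℝ) : ℂ) = 1 - (q : ℂ) := by push_cast; ring
  rw [qExp_ofReal_of_nonpos hq hx, ← hexp,
    ← Complex.ofReal_cpow (Real.rpow_nonneg hbase _), ← Real.rpow_mul hbase,
    one_div_mul_cancel (by linarith), Real.rpow_one]

lemma qProdC_qExp_ofReal {q : ℝ} (hq : 1 ≤ q) {x y : ℝ} (hx : x ≤ 0) (hy : y ≤ 0) :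
    qProdC q (qExp q x) (qExp q y) = qExp q ((x + y : ℝ) : ℂ) := by
  rcases hq.eq_or_lt with rfl | hq
  · simp [qProdC, qExp_one]
  have hsum : ((1 + (1 - q) * x : ℝ) : ℂ) + ((1 + (1 - q) * y : ℝ) : ℂ) - 1
      = ((1 + (1 - q) * (x + y) : ℝ) : ℂ) := by push_cast; ring
  have hbase : 0 ≤ 1 + (1 - q) * (x + y) := by nlinarith
  rw [qProdC, qExp_ofReal_cpow_one_sub hq hx, qExp_ofReal_cpow_one_sub hq hy, hsum,
    qExp_ofReal_of_nonpos hq (add_nonpos hx hy), Complex.ofReal_cpow hbase]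
  push_cast
  ring_nf

lemma qProdFold_qExp_ofReal {q : ℝ} (hq : 1 ≤ q) {g : ℕ → ℂ} {x : ℕ → ℝ} (n : ℕ)
    (hg : ∀ j ≤ n, g j = qExp q (x j)) (hx : ∀ j ≤ n, x j ≤ 0) :
    qProdFold q g (n + 1) = qExp q ((∑ j ∈ Finset.range (n + 1), x j : ℝ) : ℂ) := by
  induction n with
  | zero => simp [qProdFold, hg 0 le_rfl]
  | succ n ih =>
    have hpartial : ∑ j ∈ Finset.range (n + 1), x j ≤ 0 :=
      Finset.sum_nonpos fun j hj => hx j (Finset.mem_range.1 hj).le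
    rw [qProdFold, ih (fun j hj => hg j (by omega)) (fun j hj => hx j (by omega)),
      hg (n + 1) le_rfl, qProdC_qExp_ofReal hq hpartial (hx (n + 1) le_rfl),
      Finset.sum_range_succ _ (n + 1)]

lemma qFourier_rescale {q : ℝ} {f : ℝ → ℝ} (hf : ∀ x, 0 ≤ f x) {a : ℝ} (ha : a ≠ 0)
    (ξ : ℝ) :
    qFourier q (fun x => (1 / |a|) * f (x / a)) ξ = qFourier q f (a * |a| ^ (1 - q) * ξ) := by
  have ha' : 0 < |a| := abs_pos.2 ha
  set h : ℝ → ℂ := fun y => (f y : ℂ) *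
    qExp q (I * y * ((a * |a| ^ (1 - q) * ξ : ℝ) : ℂ) * ((f y ^ (q - 1) : ℝ) : ℂ))
  have hintegrand : ∀ x : ℝ, (((1 / |a|) * f (x / a) : ℝ) : ℂ) *
      qExp q (I * x * ξ * ((((1 / |a|) * f (x / a)) ^ (q - 1) : ℝ) : ℂ))
      = (1 / |a| : ℝ) • h (x / a) := by
    intro x
    have hpow : ((1 / |a|) * f (x / a)) ^ (q - 1) = |a| ^ (1 - q) * f (x / a) ^ (q - 1) := by
      rw [Real.mul_rpow (by positivity) (hf _), one_div, Real.inv_rpow ha'.le,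
        ← Real.rpow_neg ha'.le]
      ring_nf
    simp only [h, hpow, Complex.real_smul]
    have haC : (a : ℂ) ≠ 0 := by exact_mod_cast ha
    push_cast
    field_simp
  simp only [qFourier, hintegrand]
  rw [integral_smul, Measure.integral_comp_div h a, smul_smul, one_div,
    inv_mul_cancel₀ ha'.ne', one_smul]

lemma qFourier_rescale_of_stable {q α β : ℝ} {f : ℝ → ℝ} (hf : ∀ x, 0 ≤ f x)
    (hstab : ∀ ξ : ℝ, qFourier q f ξ = qExp q ((-(β * |ξ| ^ α) : ℝ) : ℂ))
    {a : ℝ} (ha : a ≠ 0) (ξ : ℝ) :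
    qFourier q (fun x => (1 / |a|) * f (x / a)) ξ
      = qExp q ((-(β * |a| ^ (α * (2 - q)) * |ξ| ^ α) : ℝ) : ℂ) := by
  have ha' : 0 < |a| := abs_pos.2 ha
  have hscale : |a * |a| ^ (1 - q) * ξ| = |a| ^ (2 - q) * |ξ| := by
    rw [abs_mul, abs_mul, abs_of_nonneg (Real.rpow_nonneg ha'.le _),
      show 2 - q = 1 + (1 - q) by ring, Real.rpow_add ha', Real.rpow_one]
  rw [qFourier_rescale hf ha, hstab, hscale,
    Real.mul_rpow (Real.rpow_nonneg ha'.le _) (abs_nonneg _), ← Real.rpow_mul ha'.le,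
    mul_comm (2 - q) α, mul_assoc]

theorem qStable_linear_combination_general (q α : ℝ) (hq1 : 1 ≤ q) (m : ℕ) (hm : 1 ≤ m)
    (f : ℕ → ℝ → ℝ) (β : ℕ → ℝ) (a : ℕ → ℝ)
    (hf_nn : ∀ j x, 0 ≤ f j x)
    (hβ : ∀ j, j < m → 0 < β j) (ha : ∀ j, j < m → a j ≠ 0)
    (hstab : ∀ j, j < m → ∀ ξ : ℝ,
      qFourier q (f j) ξ = qExp q (((-(β j * |ξ| ^ α)) : ℝ) : ℂ))
    (p : ℕ → ℝ → ℝ)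
    (hp1 : p 1 = fun x => (1 / |a 0|) * f 0 (x / a 0))
    (hqind : ∀ k, 2 ≤ k → k ≤ m → ∀ ξ : ℝ,
      qFourier q (p k) ξ =
        qProdFold q (fun j => qFourier q (fun x => (1 / |a j|) * f j (x / a j)) ξ) k) :
    0 < ∑ j ∈ Finset.range m, β j * |a j| ^ (α * (2 - q)) ∧
    ∀ ξ : ℝ, qFourier q (p m) ξ =
      qExp q (((-((∑ j ∈ Finset.range m, β j * |a j| ^ (α * (2 - q))) * |ξ| ^ α)) : ℝ) : ℂ) := by
  have hcoeff : ∀ j < m, 0 < β j * |a j| ^ (α * (2 - q)) := fun j hj =>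
    mul_pos (hβ j hj) (Real.rpow_pos_of_pos (abs_pos.2 (ha j hj)) _)
  refine ⟨Finset.sum_pos (fun j hj => hcoeff j (Finset.mem_range.1 hj)) ⟨0, by simp; omega⟩,
    fun ξ => ?_⟩
  have hfold : qFourier q (p m) ξ =
      qProdFold q (fun j => qFourier q (fun x => (1 / |a j|) * f j (x / a j)) ξ) m := by
    rcases hm.eq_or_lt with rfl | hm2
    · rw [hp1]; rfl
    · exact hqind m hm2 le_rfl ξ
  obtain ⟨n, rfl⟩ := Nat.exists_eq_add_of_le' hm
  rw [hfold, qProdFold_qExp_ofReal hq1 n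
    (fun j hj => qFourier_rescale_of_stable (hf_nn j) (hstab j (by omega)) (ha j (by omega)) ξ)
    (fun j hj => neg_nonpos.2 (mul_nonneg (hcoeff j (by omega)).le (by positivity))),
    Finset.sum_mul, ← Finset.sum_neg_distrib]

/-- Linear combinations of `q`-independent `(q,α)`-stable random variables are
`(q,α)`-stable, with `β = Σ β_j |a_j|^{α(2-q)}`. -/
theorem qStable_linear_combination (q α : ℝ) (hq1 : 1 ≤ q) (hq2 : q < 2)
    (hα1 : 0 < α) (hα2 : α < 2) (m : ℕ) (hm : 1 ≤ m)
    (f : ℕ → ℝ → ℝ) (β : ℕ → ℝ) (a : ℕ → ℝ)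
    (hf_nn : ∀ j x, 0 ≤ f j x) (hf_int : ∀ j, Integrable (f j))
    (hf_one : ∀ j, ∫ x : ℝ, f j x = 1)
    (hβ : ∀ j, j < m → 0 < β j) (ha : ∀ j, j < m → a j ≠ 0)
    (hstab : ∀ j, j < m → ∀ ξ : ℝ,
      qFourier q (f j) ξ = qExp q (((-(β j * |ξ| ^ α)) : ℝ) : ℂ))
    (p : ℕ → ℝ → ℝ)
    (hp_nn : ∀ k x, 0 ≤ p k x) (hp_int : ∀ k, 1 ≤ k → k ≤ m → Integrable (p k))
    (hp1 : p 1 = fun x => (1 / |a 0|) * f 0 (x / a 0))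
    (hqind : ∀ k, 2 ≤ k → k ≤ m → ∀ ξ : ℝ,
      qFourier q (p k) ξ =
        qProdFold q (fun j => qFourier q (fun x => (1 / |a j|) * f j (x / a j)) ξ) k) :
    0 < ∑ j ∈ Finset.range m, β j * |a j| ^ (α * (2 - q)) ∧
    ∀ ξ : ℝ, qFourier q (p m) ξ =
      qExp q (((-((∑ j ∈ Finset.range m, β j * |a j| ^ (α * (2 - q))) * |ξ| ^ α)) : ℝ) : ℂ) :=
  qStable_linear_combination_general q α hq1 m hm f β a hf_nn hβ ha hstab p hp1 hqind
end
end

section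
/- Let q ≠ 1 and let I_q = (−1/|1−q|, 1/|1−q|). For every real x ∈ I_q the q-analogues of Euler's formulas hold: (i) e_q^{ix} = cos_q(x) + i sin_q(x), so that cos_q(x) = 1 − x² Σ_{n=0}^∞ (−1)^n A_{2n}(q) x^{2n}/(2n+2)! is the real part and sin_q(x) = x − x² Σ_{n=0}^∞ (−1)^n A_{2n+1}(q) x^{2n+1}/(2n+3)! is the imaginary part of e_q^{ix}; (ii) cos_q(x) = (e_q^{ix} + e_q^{−ix})/2; (iii) sin_q(x) = (e_q^{ix} − e_q^{−ix})/(2i). -/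
open Complex MeasureTheory Filter Topology

noncomputable section

/-!
Writing `w = (1 - q) z`, `e_q^z = (1 + w)^{1/(1-q)}` is a binomial series, convergent for
`‖w‖ < 1`. In powers of `z` its coefficients are `∏_{k<n} (1 - k(1-q)) / n!`, which for `n ≥ 2`
equal `A_{n-2}(q) / n!`. They are real, so at `z = i x` the even powers give the real part and the
odd powers the imaginary part, and these are the series defining `cos_q x` and `sin_q x`; reality
of the coefficients also gives `e_q^{-ix} = conj e_q^{ix}`, hence (ii) and (iii).
-/

open Finset ComplexConjugate

theorem Ring.choose_eq_prod_range_div {K : Type*} [Field K] [CharZero K] (a : K) (n : ℕ) :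
    Ring.choose a n = (∏ j ∈ range n, (a - j)) / n.factorial := by
  rw [Ring.choose_eq_smul, ← Polynomial.aeval_eq_smeval, ← descPochhammer_eval_eq_prod_range,
    ← descPochhammer_map (algebraMap ℤ K), Polynomial.eval_map_algebraMap, smul_eq_mul,
    inv_mul_eq_div]

theorem Complex.hasSum_one_add_cpow {a z : ℂ} (hz : ‖z‖ < 1) :
    HasSum (fun n ↦ Ring.choose a n * z ^ n) ((1 + z) ^ a) := by
  have hz' : z ∈ Metric.eball (0 : ℂ) 1 := by
    rw [← ENNReal.ofReal_one, Metric.eball_ofReal]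
    simpa using hz
  simpa [binomialSeries, FormalMultilinearSeries.ofScalars_apply_eq, mul_comm] using
    Complex.one_add_cpow_hasFPowerSeriesOnBall_zero.hasSum hz'

theorem hasSum_comp_two_mul_iff {M : Type*} [AddCommMonoid M] [TopologicalSpace M]
    {f : ℕ → M} {a : M} (hf : ∀ n, f (2 * n + 1) = 0) :
    HasSum (fun n ↦ f (2 * n)) a ↔ HasSum f a := by
  refine (Function.Injective.hasSum_iff (g := (2 * ·)) (fun m n h ↦ by simpa using h) ?_)
  intro n hn
  obtain ⟨m, rfl⟩ : Odd n := Nat.not_even_iff_odd.1 fun ⟨m, hm⟩ ↦ hn ⟨m, show 2 * m = n by omega⟩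
  exact hf m

theorem hasSum_comp_two_mul_add_one_iff {M : Type*} [AddCommMonoid M] [TopologicalSpace M]
    {f : ℕ → M} {a : M} (hf : ∀ n, f (2 * n) = 0) :
    HasSum (fun n ↦ f (2 * n + 1)) a ↔ HasSum f a := by
  refine (Function.Injective.hasSum_iff (g := (2 * · + 1)) (fun m n h ↦ by simpa using h) ?_)
  intro n hn
  obtain ⟨m, rfl⟩ : Even n := Nat.not_odd_iff_even.1 fun ⟨m, hm⟩ ↦ hn ⟨m, hm.symm⟩
  simpa [two_mul] using hf m

namespace Complex

theorem I_mul_ofReal_pow_two_mul (x : ℝ) (n : ℕ) :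
    (I * x) ^ (2 * n) = (((-1) ^ n * x ^ (2 * n) : ℝ) : ℂ) := by
  push_cast
  rw [mul_pow, pow_mul, I_sq]

theorem I_mul_ofReal_pow_two_mul_add_one (x : ℝ) (n : ℕ) :
    (I * x) ^ (2 * n + 1) = (((-1) ^ n * x ^ (2 * n + 1) : ℝ) : ℂ) * I := by
  rw [pow_succ, I_mul_ofReal_pow_two_mul]
  push_cast
  ring

variable {c : ℕ → ℝ} {x : ℝ} {s : ℂ}

theorem hasSum_re_of_hasSum_I_mul_pow (h : HasSum (fun n ↦ (c n : ℂ) * (I * x) ^ n) s) :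
    HasSum (fun n ↦ (-1) ^ n * c (2 * n) * x ^ (2 * n)) s.re := by
  have hre := (hasSum_comp_two_mul_iff fun n ↦ ?_).2 (hasSum_re h)
  · convert hre using 2 with n
    rw [I_mul_ofReal_pow_two_mul, ← ofReal_mul, ofReal_re]
    ring
  · rw [I_mul_ofReal_pow_two_mul_add_one, ← mul_assoc, ← ofReal_mul, mul_I_re, ofReal_im,
      neg_zero]

theorem hasSum_im_of_hasSum_I_mul_pow (h : HasSum (fun n ↦ (c n : ℂ) * (I * x) ^ n) s) :
    HasSum (fun n ↦ (-1) ^ n * c (2 * n + 1) * x ^ (2 * n + 1)) s.im := by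
  have him := (hasSum_comp_two_mul_add_one_iff fun n ↦ ?_).2 (hasSum_im h)
  · convert him using 2 with n
    rw [I_mul_ofReal_pow_two_mul_add_one, ← mul_assoc, ← ofReal_mul, mul_I_im, ofReal_re]
    ring
  · rw [I_mul_ofReal_pow_two_mul, ← ofReal_mul, ofReal_im]

end Complex

def qExpCoeff (q : ℝ) (n : ℕ) : ℝ := (∏ k ∈ range n, (1 - k * (1 - q))) / n.factorial

section QExp

variable {q : ℝ}

@[simp] theorem qExpCoeff_zero : qExpCoeff q 0 = 1 := by simp [qExpCoeff]

@[simp] theorem qExpCoeff_one : qExpCoeff q 1 = 1 := by simp [qExpCoeff]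

theorem qExpCoeff_add_two (n : ℕ) : qExpCoeff q (n + 2) = qA q n / (n + 2).factorial := by
  rw [qExpCoeff, qA, prod_range_succ' _ (n + 1)]
  congr 1
  simp only [Nat.cast_add, Nat.cast_one, CharP.cast_eq_zero, zero_mul, sub_zero, mul_one]
  exact prod_congr rfl fun k _ ↦ by ring

theorem choose_mul_pow_eq_qExpCoeff (hq : q ≠ 1) (n : ℕ) :
    Ring.choose (1 / (1 - q : ℂ)) n * (1 - q) ^ n = qExpCoeff q n := by
  have hq' : (1 - q : ℂ) ≠ 0 := sub_ne_zero.2 (by exact_mod_cast hq.symm)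
  rw [Ring.choose_eq_prod_range_div, qExpCoeff, div_mul_eq_mul_div,
    show (1 - q : ℂ) ^ n = ∏ _k ∈ range n, (1 - q : ℂ) by simp, ← prod_mul_distrib]
  push_cast
  congr 1
  exact prod_congr rfl fun k _ ↦ by field_simp

theorem hasSum_qExp (hq : q ≠ 1) {z : ℂ} (hz : |1 - q| * ‖z‖ < 1) :
    HasSum (fun n ↦ (qExpCoeff q n : ℂ) * z ^ n) (qExp q z) := by
  have hz' : ‖(1 - q : ℂ) * z‖ < 1 := by
    rwa [norm_mul, ← Complex.ofReal_one, ← Complex.ofReal_sub, Complex.norm_real,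
      Real.norm_eq_abs]
  rw [qExp]
  convert Complex.hasSum_one_add_cpow (a := 1 / (1 - q)) hz' using 2 with n
  rw [← choose_mul_pow_eq_qExpCoeff hq, mul_pow, mul_assoc]

theorem qExp_conj (hq : q ≠ 1) {z : ℂ} (hz : |1 - q| * ‖z‖ < 1) :
    qExp q (conj z) = conj (qExp q z) := by
  have hconj : HasSum (fun n ↦ conj ((qExpCoeff q n : ℂ) * z ^ n)) (qExp q (conj z)) := by
    simpa using hasSum_qExp hq (z := conj z) (by rwa [Complex.norm_conj])
  exact ((Complex.hasSum_conj'.2 (hasSum_qExp hq hz)).unique hconj).symm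

theorem qCos_eq_of_hasSum {x s : ℝ}
    (h : HasSum (fun n ↦ (-1) ^ n * qExpCoeff q (2 * n) * x ^ (2 * n)) s) : qCos q x = s := by
  have htail : HasSum (fun n ↦ x ^ 2 *
      ((-1 : ℝ) ^ n * qA q (2 * n) / (2 * n + 2).factorial * x ^ (2 * n))) (1 - s) := by
    have h1 := ((hasSum_nat_add_iff' 1).2 h).neg
    rw [show -(s - ∑ i ∈ range 1, _) = 1 - s by simp] at h1
    refine h1.congr_fun fun n ↦ ?_
    rw [show 2 * (n + 1) = 2 * n + 2 by ring, qExpCoeff_add_two]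
    ring
  rw [qCos, ← tsum_mul_left, htail.tsum_eq]
  ring

theorem qSin_eq_of_hasSum {x s : ℝ}
    (h : HasSum (fun n ↦ (-1) ^ n * qExpCoeff q (2 * n + 1) * x ^ (2 * n + 1)) s) :
    qSin q x = s := by
  have htail : HasSum (fun n ↦ x ^ 2 *
      ((-1 : ℝ) ^ n * qA q (2 * n + 1) / (2 * n + 3).factorial * x ^ (2 * n + 1))) (x - s) := by
    have h1 := ((hasSum_nat_add_iff' 1).2 h).neg
    rw [show -(s - ∑ i ∈ range 1, _) = x - s by simp] at h1
    refine h1.congr_fun fun n ↦ ?_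
    rw [show 2 * (n + 1) + 1 = 2 * n + 1 + 2 by ring, qExpCoeff_add_two]
    ring
  rw [qSin, ← tsum_mul_left, htail.tsum_eq]
  ring

end QExp

/-- `q`-analogues of Euler's formulas on `I_q = (-1/|1-q|, 1/|1-q|)`:
`e_q^{ix} = cos_q x + i sin_q x` (with `cos_q x`, `sin_q x` its real and imaginary
parts), `cos_q x = (e_q^{ix}+e_q^{-ix})/2`, `sin_q x = (e_q^{ix}-e_q^{-ix})/(2i)`. -/
theorem qExp_euler_formulas (q : ℝ) (hq : q ≠ 1) (x : ℝ) (hx : |x| < 1 / |1 - q|) :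
    qExp q (Complex.I * (x : ℂ)) = ((qCos q x : ℝ) : ℂ) + Complex.I * ((qSin q x : ℝ) : ℂ) ∧
    (qExp q (Complex.I * (x : ℂ))).re = qCos q x ∧
    (qExp q (Complex.I * (x : ℂ))).im = qSin q x ∧
    ((qCos q x : ℝ) : ℂ) =
      (qExp q (Complex.I * (x : ℂ)) + qExp q (-(Complex.I * (x : ℂ)))) / 2 ∧
    ((qSin q x : ℝ) : ℂ) =
      (qExp q (Complex.I * (x : ℂ)) - qExp q (-(Complex.I * (x : ℂ)))) / (2 * Complex.I) := by
  have hz : |1 - q| * ‖I * x‖ < 1 := by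
    rw [norm_mul, norm_I, one_mul, norm_real, Real.norm_eq_abs,
      ← lt_div_iff₀' (abs_pos.2 (sub_ne_zero.2 hq.symm))]
    exact hx
  have hE := hasSum_qExp hq hz
  have hre : (qExp q (I * x)).re = qCos q x :=
    (qCos_eq_of_hasSum (hasSum_re_of_hasSum_I_mul_pow hE)).symm
  have him : (qExp q (I * x)).im = qSin q x :=
    (qSin_eq_of_hasSum (hasSum_im_of_hasSum_I_mul_pow hE)).symm
  have hconj : qExp q (-(I * x)) = conj (qExp q (I * x)) := by
    rw [← qExp_conj hq hz, map_mul, conj_I, conj_ofReal, neg_mul]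
  refine ⟨?_, hre, him, ?_, ?_⟩
  · rw [← hre, ← him]
    exact (re_add_im _).symm.trans (by ring)
  · rw [hconj, add_conj, ← hre]
    push_cast
    ring
  · rw [hconj, sub_conj, ← him]
    field_simp
    push_cast
    ring
end
end

section
/- Let 1 < q < 2. For all real numbers x, t with x(2−q)t ≠ 0 and all R > 0, the identity (1/R) ∫_{−R}^{R} e_q^{i x ξ t} dξ = 2 sin_{1/(2−q)}(R x (2−q) t) / (R x (2−q) t) holds. -/
open Complex MeasureTheory Filter Topology

noncomputable section

/-!
With `q' = 1/(2-q)` one has `1/(1-q') = (2-q)/(1-q) = 1/(1-q) + 1` and `(1-q')(2-q) = 1-q`, so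
`e_{q'}^{(2-q)z} = (1+(1-q)z)^{1/(1-q)+1}` and `ξ ↦ e_{q'}^{(2-q)iaξ} / ((2-q)ia)` is an antiderivative
of `ξ ↦ e_q^{iaξ}`. On the imaginary axis the base `1+(1-q)iaξ` has real part `1`, so the principal
branch is smooth there and the fundamental theorem of calculus applies; the values at `±R` are
the two terms of `sin_{q'}`.
-/

lemma one_add_mul_I_mul_mem_slitPlane (q b : ℝ) :
    1 + (1 - (q : ℂ)) * (I * b) ∈ slitPlane :=
  Or.inl (by simp)

lemma continuousAt_qExp {q : ℝ} {z : ℂ} (hz : 1 + (1 - (q : ℂ)) * z ∈ slitPlane) :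
    ContinuousAt (qExp q) z :=
  (continuousAt_const.add (continuousAt_const.mul continuousAt_id)).cpow continuousAt_const hz

lemma qExp_one_div_two_sub (q : ℝ) (hq2 : q ≠ 2) (z : ℂ) :
    qExp (1 / (2 - q)) ((2 - q) * z) = (1 + (1 - (q : ℂ)) * z) ^ (((2 : ℂ) - q) / (1 - q)) := by
  have h2q : (2 : ℂ) - q ≠ 0 := by exact_mod_cast sub_ne_zero.2 (Ne.symm hq2)
  have hdual : (1 : ℂ) - 1 / (2 - q) = (1 - q) / (2 - q) := by field_simp; ring
  unfold qExp
  push_cast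
  rw [hdual, one_div_div]
  congr 2
  field_simp

lemma hasDerivAt_qExp_one_div_two_sub {q : ℝ} (hq1 : q ≠ 1) (hq2 : q ≠ 2) {z : ℂ}
    (hz : 1 + (1 - (q : ℂ)) * z ∈ slitPlane) :
    HasDerivAt (fun z ↦ qExp (1 / (2 - q)) ((2 - q) * z)) ((2 - q) * qExp q z) z := by
  have h1q : (1 : ℂ) - q ≠ 0 := by exact_mod_cast sub_ne_zero.2 (Ne.symm hq1)
  simp only [qExp_one_div_two_sub q hq2]
  have hbase : HasDerivAt (fun z : ℂ ↦ 1 + (1 - (q : ℂ)) * z) (1 - q) z := by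
    simpa using ((hasDerivAt_id z).const_mul (1 - (q : ℂ))).const_add 1
  convert hbase.cpow_const (c := ((2 : ℂ) - q) / (1 - q)) hz using 1
  have hexp : ((2 : ℂ) - q) / (1 - q) - 1 = 1 / (1 - q) := by field_simp; ring
  rw [hexp, qExp]
  field_simp

-- Multiplied out, so that the case `a = 0` needs no separate hypothesis.
lemma integral_qExp_I_mul {q : ℝ} (hq1 : q ≠ 1) (hq2 : q ≠ 2) (a α β : ℝ) :
    ((2 - q) * I * a) * ∫ ξ in α..β, qExp q (I * a * ξ) =
      qExp (1 / (2 - q)) ((2 - q) * (I * a * β)) - qExp (1 / (2 - q)) ((2 - q) * (I * a * α)) := by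
  have hmem (ξ : ℝ) : 1 + (1 - (q : ℂ)) * (I * a * ξ) ∈ slitPlane := by
    simpa [mul_assoc] using one_add_mul_I_mul_mem_slitPlane q (a * ξ)
  have hderiv (ξ : ℝ) : HasDerivAt (fun ξ : ℝ ↦ qExp (1 / (2 - q)) ((2 - q) * (I * a * ξ)))
      ((2 - q) * I * a * qExp q (I * a * ξ)) ξ := by
    have hline : HasDerivAt (fun ξ : ℂ ↦ I * a * ξ) (I * a) ξ := by
      simpa using (hasDerivAt_id (ξ : ℂ)).const_mul (I * a)
    exact (((hasDerivAt_qExp_one_div_two_sub hq1 hq2 (hmem ξ)).comp (ξ : ℂ) hline).comp_ofReal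
      ).congr_deriv (by ring)
  have hcont : Continuous fun ξ : ℝ ↦ (2 - q) * I * a * qExp q (I * a * ξ) :=
    continuous_const.mul <| continuous_iff_continuousAt.2 fun ξ ↦
      (continuousAt_qExp (hmem ξ)).comp (f := fun ξ : ℝ ↦ I * a * ξ) (by fun_prop)
  rw [← intervalIntegral.integral_const_mul,
    intervalIntegral.integral_eq_sub_of_hasDerivAt (fun ξ _ ↦ hderiv ξ)
      (hcont.intervalIntegrable α β)]

/-- The averaging identity
`(1/R)∫_{-R}^{R} e_q^{ixξt} dξ = 2 sin_{1/(2-q)}(Rx(2-q)t)/(Rx(2-q)t)` for `1 < q < 2`. -/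
theorem qExp_average_identity (q : ℝ) (hq1 : 1 < q) (hq2 : q < 2)
    (x t R : ℝ) (hxt : x * (2 - q) * t ≠ 0) (hR : 0 < R) :
    ((1 / R : ℝ) : ℂ) * ∫ ξ in (-R)..R, qExp q (Complex.I * (x : ℂ) * (ξ : ℂ) * (t : ℂ)) =
      2 * qSinC (1 / (2 - q)) (R * x * (2 - q) * t) / ((R * x * (2 - q) * t : ℝ) : ℂ) := by
  have hint := integral_qExp_I_mul hq1.ne' hq2.ne (x * t) (-R) R
  have hx : (x : ℂ) ≠ 0 := by exact_mod_cast left_ne_zero_of_mul (left_ne_zero_of_mul hxt)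
  have ht : (t : ℂ) ≠ 0 := by exact_mod_cast right_ne_zero_of_mul hxt
  have h2q : (2 : ℂ) - q ≠ 0 := by exact_mod_cast (sub_pos.2 hq2).ne'
  have hR' : (R : ℂ) ≠ 0 := by exact_mod_cast hR.ne'
  have hintegrand :
      (fun ξ : ℝ ↦ qExp q (I * x * ξ * t)) = fun ξ : ℝ ↦ qExp q (I * ↑(x * t) * ξ) := by
    ext ξ; push_cast; ring_nf
  rw [hintegrand, qSinC]
  push_cast at hint ⊢
  rw [show I * (R * x * (2 - q) * t) = (2 - q) * (I * (x * t) * R) by ring,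
    show -((2 - q) * (I * (x * t) * R)) = (2 - q) * (I * (x * t) * -R) by ring, ← hint]
  field_simp
end
end

section
/- For real y: (a) if q < 1, then |e_q^{iy}| ≥ 1 and |e_q^{iy}| ~ K_q (1+y²)^{1/(2(1−q))} as y → ∞, where K_q = (1−q)^{1/(1−q)}; (b) if q > 1, then 0 < |e_q^{iy}| ≤ 1 and |e_q^{iy}| → 0 as |y| → ∞. -/
/-!
Since the exponent `1/(1-q)` is real, `|e_q^{iy}| = |1 + i(1-q)y|^{1/(1-q)}
= (1 + (1-q)²y²)^{1/(2(1-q))}`. The base is at least `1` and tends to infinity with `|y|`,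
so the sign of `1 - q` decides everything. For `q < 1`, dividing by `(1 + y²)^{1/(2(1-q))}`
leaves `((1 + (1-q)²y²)/(1 + y²))^{1/(2(1-q))} → ((1-q)²)^{1/(2(1-q))} = K_q`.
-/

open Complex MeasureTheory Filter Topology

noncomputable section

open Real

lemma tendsto_sq_cocompact_atTop : Tendsto (fun y : ℝ => y ^ 2) (cocompact ℝ) atTop :=
  ((tendsto_pow_atTop two_ne_zero).comp tendsto_norm_cocompact_atTop).congr fun y => by
    simp [sq_abs]

lemma tendsto_one_add_mul_sq_cocompact_atTop {c : ℝ} (hc : 0 < c) :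
    Tendsto (fun y : ℝ => 1 + c * y ^ 2) (cocompact ℝ) atTop :=
  tendsto_atTop_add_const_left _ 1 (tendsto_sq_cocompact_atTop.const_mul_atTop hc)

lemma tendsto_one_add_mul_sq_div_cocompact {c : ℝ} (hc : c ≠ 0) :
    Tendsto (fun y : ℝ => (1 + c * y ^ 2) / (c * (1 + y ^ 2))) (cocompact ℝ) (𝓝 1) := by
  have hdecay : Tendsto (fun y : ℝ => (1 + y ^ 2)⁻¹) (cocompact ℝ) (𝓝 0) := by
    simpa only [Function.comp_def, one_mul] using
      tendsto_inv_atTop_zero.comp (tendsto_one_add_mul_sq_cocompact_atTop one_pos)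
  have hlim := (hdecay.const_mul ((1 - c) / c)).const_add 1
  rw [mul_zero, add_zero] at hlim
  refine hlim.congr fun y => ?_
  have : 1 + y ^ 2 ≠ 0 := by positivity
  field_simp
  ring

/-- Also true at `q = 1`, where both exponents are the junk value `1 / 0 = 0`. -/
lemma norm_qExp_I_mul (q y : ℝ) :
    ‖qExp q (I * y)‖ = (1 + (1 - q) ^ 2 * y ^ 2) ^ (1 / (2 * (1 - q))) := by
  have hbase : 1 + (1 - (q : ℂ)) * (I * y) = (1 : ℝ) + ((1 - q) * y : ℝ) * I := by
    push_cast; ring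
  have hexp : (1 : ℂ) / (1 - q) = ((1 / (1 - q) : ℝ) : ℂ) := by push_cast; ring
  rw [qExp, hbase, hexp, norm_cpow_real, norm_add_mul_I, sqrt_eq_rpow,
    ← rpow_mul (by positivity)]
  congr 1
  · ring
  · rw [one_div_mul_one_div]

lemma norm_qExp_I_mul_pos (q y : ℝ) : 0 < ‖qExp q (I * y)‖ := by
  rw [norm_qExp_I_mul]; positivity

lemma one_le_one_add_sq_mul_sq (c y : ℝ) : 1 ≤ 1 + c ^ 2 * y ^ 2 :=
  le_add_of_nonneg_right (by positivity)

lemma one_le_norm_qExp_I_mul {q : ℝ} (hq : q < 1) (y : ℝ) : 1 ≤ ‖qExp q (I * y)‖ := by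
  rw [norm_qExp_I_mul]
  exact one_le_rpow (one_le_one_add_sq_mul_sq (1 - q) y) (div_nonneg zero_le_one (by linarith))

lemma norm_qExp_I_mul_le_one {q : ℝ} (hq : 1 < q) (y : ℝ) : ‖qExp q (I * y)‖ ≤ 1 := by
  rw [norm_qExp_I_mul]
  exact rpow_le_one_of_one_le_of_nonpos (one_le_one_add_sq_mul_sq (1 - q) y)
    (div_nonpos_of_nonneg_of_nonpos zero_le_one (by linarith))

lemma tendsto_norm_qExp_I_mul_div_cocompact {q : ℝ} (hq : q < 1) :
    Tendsto (fun y : ℝ => ‖qExp q (I * y)‖ /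
        ((1 - q) ^ (1 / (1 - q)) * (1 + y ^ 2) ^ (1 / (2 * (1 - q))))) (cocompact ℝ) (𝓝 1) := by
  have hc : 0 < 1 - q := by linarith
  have hK : (1 - q) ^ (1 / (1 - q)) = ((1 - q) ^ 2) ^ (1 / (2 * (1 - q))) := by
    rw [← rpow_natCast, ← rpow_mul hc.le]
    congr 1
    field_simp
    norm_num
  have hlim := (tendsto_one_add_mul_sq_div_cocompact (pow_pos hc 2).ne').rpow_const
    (p := 1 / (2 * (1 - q))) (Or.inl one_ne_zero)
  rw [one_rpow] at hlim
  refine hlim.congr fun y => ?_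
  rw [norm_qExp_I_mul, hK, div_rpow (by positivity) (by positivity),
    mul_rpow (by positivity) (by positivity)]

lemma tendsto_norm_qExp_I_mul_cocompact {q : ℝ} (hq : 1 < q) :
    Tendsto (fun y : ℝ => ‖qExp q (I * y)‖) (cocompact ℝ) (𝓝 0) := by
  have hexp : 1 / (2 * (1 - q)) = -(1 / (2 * (q - 1))) := by
    rw [← div_neg, ← mul_neg, neg_sub]
  have hlim := (tendsto_rpow_neg_atTop (by bound : 0 < 1 / (2 * (q - 1)))).comp
    (tendsto_one_add_mul_sq_cocompact_atTop (by nlinarith : 0 < (1 - q) ^ 2))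
  exact hlim.congr fun y => by rw [Function.comp_apply, norm_qExp_I_mul, hexp]

/-- Modulus of `e_q^{iy}`: for `q < 1`, `|e_q^{iy}| ≥ 1` and
`|e_q^{iy}| ~ K_q (1+y²)^{1/(2(1-q))}` as `y → ∞` with `K_q = (1-q)^{1/(1-q)}`;
for `q > 1`, `0 < |e_q^{iy}| ≤ 1` and `|e_q^{iy}| → 0` as `|y| → ∞`. -/
theorem qExp_modulus (q : ℝ) :
    (q < 1 →
      (∀ y : ℝ, 1 ≤ ‖qExp q (Complex.I * (y : ℂ))‖) ∧
      Tendsto (fun y : ℝ => ‖qExp q (Complex.I * (y : ℂ))‖ /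
          ((1 - q) ^ (1 / (1 - q)) * (1 + y ^ 2) ^ (1 / (2 * (1 - q)))))
        atTop (𝓝 1)) ∧
    (1 < q →
      (∀ y : ℝ, 0 < ‖qExp q (Complex.I * (y : ℂ))‖ ∧
        ‖qExp q (Complex.I * (y : ℂ))‖ ≤ 1) ∧
      Tendsto (fun y : ℝ => ‖qExp q (Complex.I * (y : ℂ))‖)
        (cocompact ℝ) (𝓝 0)) :=
  ⟨fun hq => ⟨one_le_norm_qExp_I_mul hq,
      (tendsto_norm_qExp_I_mul_div_cocompact hq).mono_left atTop_le_cocompact⟩,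
    fun hq => ⟨fun y => ⟨norm_qExp_I_mul_pos q y, norm_qExp_I_mul_le_one hq y⟩,
      tendsto_norm_qExp_I_mul_cocompact hq⟩⟩
end
end

section
/- Let 1 ≤ q < 2, let f be a probability density on ℝ, and let a > 0. If X is a random variable with density f, then the random variable aX (whose density is x ↦ (1/a) f(x/a)) satisfies F_q[aX](ξ) = F_q[X](a^{2−q} ξ) for every ξ; that is, F_q[(1/a) f(·/a)](ξ) = F_q[f](a^{2−q} ξ). -/
open Complex MeasureTheory Filter Topology

noncomputable section

/-!
Substitute `x = a y`. The rescaled density `f_a = (1/a) f(·/a)` satisfies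
`f_a(x)^{q-1} = a^{1-q} f(y)^{q-1}`, so the phase `x ξ f_a(x)^{q-1}` becomes
`y (a^{2-q} ξ) f(y)^{q-1}`, while the prefactor `1/a` of `f_a` cancels the Jacobian `a`.
-/

theorem one_div_mul_rpow {a t : ℝ} (ha : 0 < a) (ht : 0 ≤ t) (p : ℝ) :
    ((1 / a) * t) ^ p = a ^ (-p) * t ^ p := by
  rw [Real.mul_rpow (by positivity) ht, one_div, Real.inv_rpow ha.le, Real.rpow_neg ha.le]

theorem qFourier_integrand_one_div_mul (q : ℝ) {a t : ℝ} (ha : 0 < a) (ht : 0 ≤ t) (x ξ : ℝ) :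
    (((1 / a) * t : ℝ) : ℂ) * qExp q (I * x * ξ * ((((1 / a) * t) ^ (q - 1) : ℝ) : ℂ)) =
      (1 / a : ℝ) • ((t : ℂ) *
        qExp q (I * ((x / a : ℝ) : ℂ) * ((a ^ (2 - q) * ξ : ℝ) : ℂ) * ((t ^ (q - 1) : ℝ) : ℂ))) := by
  have hphase : I * x * ξ * ((a ^ (1 - q) * t ^ (q - 1) : ℝ) : ℂ) =
      I * ((x / a : ℝ) : ℂ) * ((a ^ (2 - q) * ξ : ℝ) : ℂ) * ((t ^ (q - 1) : ℝ) : ℂ) := by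
    have hscale : x * a ^ (1 - q) = x / a * a ^ (2 - q) := by
      rw [show 1 - q = 2 - q - 1 by ring, Real.rpow_sub_one ha.ne']
      ring
    have h := congrArg (fun s : ℝ => I * (s : ℂ) * ξ * ((t ^ (q - 1) : ℝ) : ℂ)) hscale
    push_cast at h ⊢
    linear_combination h
  rw [one_div_mul_rpow ha ht, neg_sub, hphase, real_smul]
  push_cast
  ring

theorem qFourier_scaling_general (q : ℝ)
    (f : ℝ → ℝ) (hf_nn : ∀ x, 0 ≤ f x) (a : ℝ) (ha : 0 < a) (ξ : ℝ) :
    qFourier q (fun x => (1 / a) * f (x / a)) ξ = qFourier q f (a ^ (2 - q) * ξ) := by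
  set G : ℝ → ℂ := fun y =>
    (f y : ℂ) * qExp q (I * (y : ℂ) * ((a ^ (2 - q) * ξ : ℝ) : ℂ) * ((f y ^ (q - 1) : ℝ) : ℂ))
  calc qFourier q (fun x => (1 / a) * f (x / a)) ξ
      = ∫ x : ℝ, (1 / a : ℝ) • G (x / a) :=
        integral_congr_ae (Eventually.of_forall fun x =>
          qFourier_integrand_one_div_mul q ha (hf_nn _) x ξ)
    _ = (1 / a : ℝ) • (|a| • ∫ y : ℝ, G y) := by rw [integral_smul, Measure.integral_comp_div]
    _ = qFourier q f (a ^ (2 - q) * ξ) := by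
        rw [abs_of_pos ha, smul_smul, one_div_mul_cancel ha.ne', one_smul]
        rfl

/-- Scaling property of the `q`-Fourier transform: `F_q[aX](ξ) = F_q[X](a^{2-q}ξ)`,
i.e. `F_q[(1/a) f(·/a)](ξ) = F_q[f](a^{2-q} ξ)` for `a > 0`. -/
theorem qFourier_scaling (q : ℝ) (hq1 : 1 ≤ q) (hq2 : q < 2)
    (f : ℝ → ℝ) (hf_nn : ∀ x, 0 ≤ f x) (hf_int : Integrable f)
    (hf_one : ∫ x : ℝ, f x = 1) (a : ℝ) (ha : 0 < a) (ξ : ℝ) :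
    qFourier q (fun x => (1 / a) * f (x / a)) ξ = qFourier q f (a ^ (2 - q) * ξ) :=
  qFourier_scaling_general q f hf_nn a ha ξ
end
end
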